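/- Let q > 0 and let k ∈ ℤ. Then the quantum trigonometric Bernstein basis functions B^n_0(·;q), B^n_1(·;q), …, B^n_n(·;q) of degree n on the interval [kπ/2, (k+1)π/2] form a totally positive system on [kπ/2, (k+1)π/2]: for all points x_0 < x_1 < ⋯ < x_m in [kπ/2, (k+1)π/2], every minor of the collocation matrix (B^n_i(x_j;q)) is nonnegative. -/

import Mathlib

/-- `d(x,y;c) = ((c+1)/2)·sin(y−x) + ((c−1)/2)·sin(y+x)`. -/
noncomputable def dq (x y c : ℝ) : ℝ :=
  (c + 1) / 2 * Real.sin (y - x) + (c - 1) / 2 * Real.sin (y + x)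

/-- The q-integer `[k]_q = 1 + q + ⋯ + q^{k−1}`. -/
noncomputable def qInt (q : ℝ) (k : ℕ) : ℝ := ∑ i ∈ Finset.range k, q ^ i

/-- The q-factorial `[k]_q!`. -/
noncomputable def qFact (q : ℝ) : ℕ → ℝ
  | 0 => 1
  | k + 1 => qInt q (k + 1) * qFact q k

/-- The q-binomial coefficient `[n choose k]_q`. -/
noncomputable def qBinom (q : ℝ) (n k : ℕ) : ℝ :=
  qFact q n / (qFact q k * qFact q (n - k))

/-- Quantum trigonometric Bernstein basis function `B^n_k(x;q)` on `[a,b]`. -/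
noncomputable def qBern (q a b : ℝ) (n k : ℕ) (x : ℝ) : ℝ :=
  qBinom q n k *
    ((∏ i ∈ Finset.range k, dq a x (q ^ i)) * ∏ i ∈ Finset.range (n - k), dq x b (q ^ i)) /
    ∏ i ∈ Finset.range n, dq a b (q ^ i)

/-- A matrix is totally positive if all its minors are nonnegative. -/
def IsTotallyPositive {p r : ℕ} (M : Matrix (Fin p) (Fin r) ℝ) : Prop :=
  ∀ (k : ℕ) (f : Fin k → Fin p) (g : Fin k → Fin r),
    StrictMono f → StrictMono g → 0 ≤ (M.submatrix f g).det

/-- A system of functions is totally positive on `I` if all its collocation matrices at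
increasing points of `I` are totally positive. -/
def IsTotallyPositiveSystem (I : Set ℝ) {n : ℕ} (φ : Fin n → ℝ → ℝ) : Prop :=
  ∀ (m : ℕ) (x : Fin (m + 1) → ℝ), StrictMono x → (∀ j, x j ∈ I) →
    IsTotallyPositive (Matrix.of fun i j => φ i (x j))

/-- Number of sign changes between consecutive entries of a list. -/
noncomputable def signChanges : List ℝ → ℕ
  | [] => 0
  | [_] => 0
  | a :: b :: t => (if a * b < 0 then 1 else 0) + signChanges (b :: t)

/-- `S⁻(v)`: the number of strict sign changes of a finite real sequence, i.e. the number
of sign changes after deleting all zero entries. -/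
noncomputable def strictSignChanges (v : List ℝ) : ℕ :=
  signChanges (v.filter fun x => x ≠ 0)

/-- Rational quantum trigonometric Bernstein basis function `R^n_k(x;q)` with weights `w`. -/
noncomputable def rqBern (q a b : ℝ) (n : ℕ) (w : Fin (n + 1) → ℝ) (k : Fin (n + 1)) (x : ℝ) : ℝ :=
  w k * qBern q a b n k x / ∑ i : Fin (n + 1), w i * qBern q a b n i x

open Real Set

lemma expsum_vanish : ∀ (k : ℕ) (e : Fin k → ℝ), StrictMono e →
    ∀ (c : Fin k → ℝ) (x : Fin k → ℝ), StrictMono x → (∀ j, 0 < x j) →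
    (∀ j, ∑ i, c i * x j ^ (e i) = 0) → ∀ i, c i = 0 := by
  intro k
  induction k with
  | zero => intro _ _ _ _ _ _ _ i; exact absurd i.2 (by omega)
  | succ k ih =>
    intro e he c x hx hxpos hzero
    set g : ℝ → ℝ := fun t => ∑ i, c i * t ^ (e i - e 0) with hg
    have hgx : ∀ j, g (x j) = 0 := by
      intro j
      have h0 : (x j : ℝ) ≠ 0 := ne_of_gt (hxpos j)
      have : g (x j) = (∑ i, c i * x j ^ (e i)) * x j ^ (-(e 0)) := by
        rw [Finset.sum_mul]
        refine Finset.sum_congr rfl fun i _ => ?_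
        rw [mul_assoc, ← Real.rpow_add (hxpos j), sub_eq_add_neg]
      rw [this, hzero j, zero_mul]
    have hderiv : ∀ t : ℝ, t ≠ 0 →
        HasDerivAt g (∑ i, c i * ((e i - e 0) * t ^ (e i - e 0 - 1))) t := by
      intro t ht
      exact HasDerivAt.fun_sum fun i _ =>
        ((Real.hasDerivAt_rpow_const (Or.inl ht)).const_mul (c i))
    have rolle : ∀ j : Fin k, ∃ y ∈ Ioo (x j.castSucc) (x j.succ),
        ∑ i, c i * ((e i - e 0) * y ^ (e i - e 0 - 1)) = 0 := by
      intro j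
      have hlt : x j.castSucc < x j.succ := hx (Fin.castSucc_lt_succ (i := j))
      have hcont : ContinuousOn g (Icc (x j.castSucc) (x j.succ)) := by
        intro t ht
        have htpos : (0:ℝ) < t := lt_of_lt_of_le (hxpos _) ht.1
        exact ((hderiv t (ne_of_gt htpos)).continuousAt).continuousWithinAt
      obtain ⟨y, hy, hdy⟩ := exists_deriv_eq_zero hlt hcont
        ((hgx _).trans (hgx _).symm)
      refine ⟨y, hy, ?_⟩
      have hypos : (0:ℝ) < y := lt_of_lt_of_le (hxpos _) (le_of_lt hy.1)
      rw [← (hderiv y (ne_of_gt hypos)).deriv]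
      exact hdy
    choose y hy hy0 using rolle
    have hymono : StrictMono y := by
      intro j l hjl
      calc y j < x j.succ := (hy j).2
        _ ≤ x l.castSucc := hx.monotone (by
            simp only [Fin.le_def, Fin.coe_castSucc, Fin.val_succ]
            exact hjl)
        _ < y l := (hy l).1
    have hypos : ∀ j, 0 < y j := fun j => lt_trans (hxpos _) (hy j).1
    have hsucc : ∀ i : Fin k, c i.succ = 0 := by
      have key : ∀ i : Fin k, c i.succ * (e i.succ - e 0) = 0 := by
        refine ih (fun i => e i.succ - e 0 - 1) ?_ _ y hymono hypos ?_
        · intro i l hil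
          have : e i.succ < e l.succ := he (by simpa using hil)
          dsimp only
          linarith
        · intro j
          have h := hy0 j
          rw [Fin.sum_univ_succ] at h
          simp only [sub_self, zero_mul, mul_zero, zero_add] at h
          rw [← h]
          exact Finset.sum_congr rfl fun i _ => by ring
      intro i
      have hne : e i.succ - e 0 ≠ 0 := by
        have : e 0 < e i.succ := he (Fin.succ_pos i)
        linarith
      exact (mul_eq_zero.1 (key i)).resolve_right hne
    have hc0 : c 0 = 0 := by
      have h := hgx 0
      rw [hg] at h
      simp only [Fin.sum_univ_succ, sub_self, Real.rpow_zero, mul_one] at h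
      have : ∀ i : Fin k, c i.succ * x 0 ^ (e i.succ - e 0) = 0 := fun i => by
        rw [hsucc i, zero_mul]
      rw [Finset.sum_eq_zero (fun i _ => this i), add_zero] at h
      exact h
    intro i
    refine Fin.cases hc0 hsucc i

/-- A generalized Vandermonde matrix at distinct positive nodes is nonsingular. -/
lemma gv_det_ne_zero (k : ℕ) (a : Fin k → ℕ) (ha : StrictMono a)
    (t : Fin k → ℝ) (ht : StrictMono t) (htpos : ∀ j, 0 < t j) :
    (Matrix.of fun i j : Fin k => t j ^ a i).det ≠ 0 := by
  intro hdet
  set N : Matrix (Fin k) (Fin k) ℝ := Matrix.of fun j i : Fin k => t j ^ a i with hN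
  have hNdet : N.det = 0 := by
    have : N = (Matrix.of fun i j : Fin k => t j ^ a i).transpose := by
      ext i j; rfl
    rw [this, Matrix.det_transpose, hdet]
  obtain ⟨v, hv, hv0⟩ := Matrix.exists_mulVec_eq_zero_iff.2 hNdet
  have : ∀ i, v i = 0 := by
    refine expsum_vanish k (fun i => (a i : ℝ)) ?_ v t ht htpos ?_
    · exact fun i l hil => by dsimp only; exact_mod_cast ha hil
    · intro j
      have := congrFun hv0 j
      simp only [Matrix.mulVec, dotProduct, Pi.zero_apply] at this
      rw [← this]
      refine Finset.sum_congr rfl fun i _ => ?_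
      rw [Real.rpow_natCast, mul_comm]
      rfl
  exact hv (funext this)

/-- A generalized Vandermonde determinant at increasing positive nodes is positive. -/
lemma gv_det_pos : ∀ (k : ℕ) (a : Fin k → ℕ), StrictMono a →
    ∀ (t : Fin k → ℝ), StrictMono t → (∀ j, 0 < t j) →
    0 < (Matrix.of fun i j : Fin k => t j ^ a i).det := by
  intro k
  induction k with
  | zero =>
    intro a _ t _ _
    simp [Matrix.det_fin_zero]
  | succ k ih =>
    intro a ha t ht htpos
    set Mt : ℝ → Matrix (Fin (k+1)) (Fin (k+1)) ℝ :=
      fun s => Matrix.of fun i j => (if j = Fin.last k then s else t j) ^ a i with hMt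
    set h : ℝ → ℝ := fun s => (Mt s).det with hh
    have hcont : Continuous h := by
      refine Continuous.matrix_det (continuous_matrix fun i j => ?_)
      by_cases hj : j = Fin.last k
      · simp only [hMt, Matrix.of_apply, hj, if_true]
        exact continuous_pow _
      · simp only [hMt, Matrix.of_apply, hj, if_false]
        exact continuous_const
    have hMeq : Mt (t (Fin.last k)) = Matrix.of fun i j : Fin (k+1) => t j ^ a i := by
      ext i j
      by_cases hj : j = Fin.last k <;> simp [hMt, hj]
    -- nonvanishing for s ≥ t last
    have hne : ∀ s, t (Fin.last k) ≤ s → h s ≠ 0 := by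
      intro s hs
      have hupos : ∀ j, 0 < (if j = Fin.last k then s else t j) := by
        intro j
        by_cases hj : j = Fin.last k
        · simpa [hj] using lt_of_lt_of_le (htpos (Fin.last k)) hs
        · simpa [hj] using htpos j
      have humono : StrictMono (fun j => if j = Fin.last k then s else t j) := by
        rw [Fin.strictMono_iff_lt_succ]
        intro j
        have h1 : (j.castSucc : Fin (k+1)) ≠ Fin.last k := (Fin.castSucc_lt_last j).ne
        by_cases h2 : (j.succ : Fin (k+1)) = Fin.last k
        · simp only [h1, if_false, h2, if_true]
          calc t j.castSucc < t (Fin.last k) := ht (h2 ▸ Fin.castSucc_lt_succ (i := j))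
            _ ≤ s := hs
        · simp only [h1, if_false, h2, if_false]
          exact ht (Fin.castSucc_lt_succ (i := j))
      exact gv_det_ne_zero (k+1) a ha _ humono hupos
    -- cofactor expansion
    set Dk : Fin (k+1) → ℝ :=
      fun i => (Matrix.of fun r c : Fin k => t (Fin.castSucc c) ^ a (i.succAbove r)).det with hDk
    have hsub : ∀ s (i : Fin (k+1)),
        (Mt s).submatrix i.succAbove (Fin.last k).succAbove
          = Matrix.of fun r c : Fin k => t (Fin.castSucc c) ^ a (i.succAbove r) := by
      intro s i
      ext r c
      simp [hMt, Matrix.submatrix, Fin.succAbove_last, (Fin.castSucc_lt_last c).ne]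
    have hexp : ∀ s, h s = ∑ i : Fin (k+1), (-1) ^ ((i : ℕ) + k) * s ^ a i * Dk i := by
      intro s
      simp only [hh]
      rw [Matrix.det_succ_column (Mt s) (Fin.last k)]
      refine Finset.sum_congr rfl fun i _ => ?_
      rw [hsub s i]
      simp [hMt, hDk, Fin.val_last]
    -- the top cofactor is positive
    have hDlast : 0 < Dk (Fin.last k) := by
      rw [hDk]
      simp only [Fin.succAbove_last]
      exact ih (fun r => a (Fin.castSucc r))
        (fun i l hil => ha (Fin.castSucc_lt_castSucc_iff.2 hil))
        (fun c => t (Fin.castSucc c))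
        (fun i l hil => ht (Fin.castSucc_lt_castSucc_iff.2 hil))
        (fun c => htpos _)
    -- choose a large node S
    set B : ℝ := ∑ i ∈ Finset.univ.erase (Fin.last k), |Dk i| with hB
    have hBnn : 0 ≤ B := Finset.sum_nonneg fun i _ => abs_nonneg _
    set S : ℝ := max (t (Fin.last k) + 1) (max 1 ((B + 1) / Dk (Fin.last k))) with hS
    have hS1 : (1:ℝ) ≤ S := le_max_of_le_right (le_max_left _ _)
    have hSpos : (0:ℝ) < S := lt_of_lt_of_le one_pos hS1
    have hSt : t (Fin.last k) + 1 ≤ S := le_max_left _ _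
    have hSD : B + 1 ≤ S * Dk (Fin.last k) := by
      have : (B + 1) / Dk (Fin.last k) ≤ S := le_max_of_le_right (le_max_right _ _)
      exact (div_le_iff₀ hDlast).1 this
    have hneg1 : ((-1:ℝ)) ^ (k + k) = 1 := by
      rw [pow_add, ← mul_pow]; norm_num
    have hsplit : h S = S ^ a (Fin.last k) * Dk (Fin.last k)
        + ∑ i ∈ Finset.univ.erase (Fin.last k), (-1) ^ ((i:ℕ) + k) * S ^ a i * Dk i := by
      rw [hexp S, ← Finset.add_sum_erase _ _ (Finset.mem_univ (Fin.last k))]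
      congr 1
      rw [Fin.val_last, hneg1, one_mul]
    have hterm : ∀ i ∈ Finset.univ.erase (Fin.last k),
        S * |(-1) ^ ((i:ℕ) + k) * S ^ a i * Dk i| ≤ S ^ a (Fin.last k) * |Dk i| := by
      intro i hi
      have hilt : i < Fin.last k :=
        lt_of_le_of_ne (Fin.le_last i) (Finset.ne_of_mem_erase hi)
      have habs : |(-1:ℝ) ^ ((i:ℕ) + k) * S ^ a i * Dk i| = S ^ a i * |Dk i| := by
        rw [abs_mul, abs_mul, abs_pow, abs_neg, abs_one, one_pow, one_mul,
          abs_of_pos (pow_pos hSpos _)]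
      calc S * |(-1:ℝ) ^ ((i:ℕ) + k) * S ^ a i * Dk i| = S ^ (a i + 1) * |Dk i| := by
            rw [habs, pow_succ]; ring
        _ ≤ S ^ a (Fin.last k) * |Dk i| := by
            refine mul_le_mul_of_nonneg_right ?_ (abs_nonneg _)
            exact pow_le_pow_right₀ hS1 (Nat.succ_le_of_lt (ha hilt))
    have hRbound : S * |∑ i ∈ Finset.univ.erase (Fin.last k),
        (-1) ^ ((i:ℕ) + k) * S ^ a i * Dk i| ≤ S ^ a (Fin.last k) * B := by
      calc S * |∑ i ∈ Finset.univ.erase (Fin.last k), (-1) ^ ((i:ℕ) + k) * S ^ a i * Dk i|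
          ≤ S * ∑ i ∈ Finset.univ.erase (Fin.last k), |(-1) ^ ((i:ℕ) + k) * S ^ a i * Dk i| :=
            mul_le_mul_of_nonneg_left (Finset.abs_sum_le_sum_abs _ _) hSpos.le
        _ = ∑ i ∈ Finset.univ.erase (Fin.last k),
            S * |(-1) ^ ((i:ℕ) + k) * S ^ a i * Dk i| := Finset.mul_sum _ _ _
        _ ≤ ∑ i ∈ Finset.univ.erase (Fin.last k), S ^ a (Fin.last k) * |Dk i| :=
            Finset.sum_le_sum hterm
        _ = S ^ a (Fin.last k) * B := by rw [hB, Finset.mul_sum]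
    have hhS : 0 < h S := by
      set R : ℝ := ∑ i ∈ Finset.univ.erase (Fin.last k),
        (-1) ^ ((i:ℕ) + k) * S ^ a i * Dk i with hR
      have h1 : S * h S = S ^ a (Fin.last k) * (S * Dk (Fin.last k)) + S * R := by
        rw [hsplit]; ring
      have h2 : -(S * |R|) ≤ S * R := by
        have := neg_abs_le (S * R)
        rwa [abs_mul, abs_of_pos hSpos] at this
      have hpow : 0 < S ^ a (Fin.last k) := pow_pos hSpos _
      have key : 0 < S * h S := by nlinarith [hRbound, hpow, hSD]
      rcases mul_pos_iff.1 key with ⟨_, h⟩ | ⟨h, _⟩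
      · exact h
      · exact absurd hSpos (not_lt.2 h.le)
    have hfin : 0 < h (t (Fin.last k)) := by
      rcases lt_trichotomy (h (t (Fin.last k))) 0 with hneg | h0 | hpos
      · exfalso
        have hle : t (Fin.last k) ≤ S := by linarith
        obtain ⟨z, hz, hz0⟩ := intermediate_value_Icc hle hcont.continuousOn
          (⟨hneg.le, hhS.le⟩ : (0:ℝ) ∈ Icc (h (t (Fin.last k))) (h S))
        exact hne z hz.1 hz0
      · exact absurd h0 (hne _ le_rfl)
      · exact hpos
    rw [← hMeq]
    exact hfin

/-- Positivity of trigonometric collocation determinants at interior nodes. -/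
lemma trig_det_pos (n κ : ℕ) (a : Fin κ → ℕ) (ha : StrictMono a) (han : ∀ i, a i ≤ n)
    (θ : Fin κ → ℝ) (hθ : StrictMono θ) (hθ0 : ∀ j, 0 < θ j) (hθ1 : ∀ j, θ j < π/2) :
    0 < (Matrix.of fun i j : Fin κ =>
      Real.sin (θ j) ^ a i * Real.cos (θ j) ^ (n - a i)).det := by
  have hcos : ∀ j, 0 < Real.cos (θ j) := fun j =>
    Real.cos_pos_of_mem_Ioo ⟨by linarith [hθ0 j, Real.pi_pos], hθ1 j⟩
  have hent : (Matrix.of fun i j : Fin κ =>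
      Real.sin (θ j) ^ a i * Real.cos (θ j) ^ (n - a i))
      = Matrix.of fun i j : Fin κ =>
        (Real.cos (θ j) ^ n) * (Real.tan (θ j) ^ a i) := by
    ext i j
    simp only [Matrix.of_apply]
    rw [Real.tan_eq_sin_div_cos, div_pow,
      pow_sub₀ _ (ne_of_gt (hcos j)) (han i)]
    field_simp
  rw [hent, show (Matrix.of fun i j : Fin κ => Real.cos (θ j) ^ n * Real.tan (θ j) ^ a i).det = _
    from Matrix.det_mul_row (fun j => Real.cos (θ j) ^ n) (Matrix.of fun i j : Fin κ => Real.tan (θ j) ^ a i)]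
  refine mul_pos (Finset.prod_pos fun j _ => pow_pos (hcos j) n) ?_
  refine gv_det_pos κ a ha _ ?_ ?_
  · intro i l hil
    exact Real.strictMonoOn_tan
      ⟨by linarith [hθ0 i, Real.pi_pos], hθ1 i⟩
      ⟨by linarith [hθ0 l, Real.pi_pos], hθ1 l⟩ (hθ hil)
  · exact fun j => Real.tan_pos_of_pos_of_lt_pi_div_two (hθ0 j) (hθ1 j)

/-- Nonnegativity of trigonometric collocation determinants on the closed quadrant. -/
lemma trig_det_nonneg (n κ : ℕ) (a : Fin κ → ℕ) (ha : StrictMono a) (han : ∀ i, a i ≤ n)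
    (θ : Fin κ → ℝ) (hθ : StrictMono θ) (hθm : ∀ j, θ j ∈ Icc 0 (π/2)) :
    0 ≤ (Matrix.of fun i j : Fin κ =>
      Real.sin (θ j) ^ a i * Real.cos (θ j) ^ (n - a i)).det := by
  set ψ : Fin κ → ℝ := fun j => (π/2) * (((j:ℕ):ℝ)+1) / ((κ:ℝ)+1) with hψ
  have hκ : (0:ℝ) < (κ:ℝ) + 1 := by positivity
  have hψpos : ∀ j, 0 < ψ j := fun j => by
    have : (0:ℝ) < ((j:ℕ):ℝ) + 1 := by positivity
    exact div_pos (mul_pos (by positivity) this) hκ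
  have hψlt : ∀ j, ψ j < π/2 := fun j => by
    rw [hψ, div_lt_iff₀ hκ]
    have hj : ((j:ℕ):ℝ) + 1 < (κ:ℝ) + 1 := by
      have := j.2
      push_cast
      exact_mod_cast by exact_mod_cast Nat.add_lt_add_right j.2 1
    nlinarith [Real.pi_pos]
  have hψmono : StrictMono ψ := by
    intro i l hil
    rw [hψ]
    dsimp only
    gcongr
    exact_mod_cast hil
  -- the perturbed angles
  set φ : ℝ → Fin κ → ℝ := fun ε j => (1 - ε) * θ j + ε * ψ j with hφ
  set F : ℝ → ℝ := fun ε => (Matrix.of fun i j : Fin κ =>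
      Real.sin (φ ε j) ^ a i * Real.cos (φ ε j) ^ (n - a i)).det with hF
  have hFcont : Continuous F := by
    refine Continuous.matrix_det (continuous_matrix fun i j => ?_)
    have hφc : Continuous fun ε => φ ε j := by
      simp only [hφ]
      fun_prop
    exact ((Real.continuous_sin.comp hφc).pow _).mul
      ((Real.continuous_cos.comp hφc).pow _)
  have hFpos : ∀ ε ∈ Ioc (0:ℝ) 1, 0 < F ε := by
    intro ε hε
    refine trig_det_pos n κ a ha han (φ ε) ?_ ?_ ?_
    · intro i l hil
      have h1 : (1 - ε) * θ i ≤ (1 - ε) * θ l :=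
        mul_le_mul_of_nonneg_left (hθ hil).le (by linarith [hε.2])
      have h2 : ε * ψ i < ε * ψ l := mul_lt_mul_of_pos_left (hψmono hil) hε.1
      simp only [hφ]
      linarith
    · intro j
      have h1 : 0 ≤ (1 - ε) * θ j :=
        mul_nonneg (by linarith [hε.2]) (hθm j).1
      have h2 : 0 < ε * ψ j := mul_pos hε.1 (hψpos j)
      simp only [hφ]
      linarith
    · intro j
      have h1 : (1 - ε) * θ j ≤ (1 - ε) * (π/2) :=
        mul_le_mul_of_nonneg_left (hθm j).2 (by linarith [hε.2])
      have h2 : ε * ψ j < ε * (π/2) := mul_lt_mul_of_pos_left (hψlt j) hε.1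
      simp only [hφ]
      linarith
  have hF0 : F 0 = (Matrix.of fun i j : Fin κ =>
      Real.sin (θ j) ^ a i * Real.cos (θ j) ^ (n - a i)).det := by
    have : φ 0 = θ := by funext j; simp [hφ]
    simp only [hF, this]
  rw [← hF0]
  have htend : Filter.Tendsto F (nhdsWithin 0 (Ioi 0)) (nhds (F 0)) :=
    (hFcont.tendsto 0).mono_left nhdsWithin_le_nhds
  refine ge_of_tendsto htend ?_
  filter_upwards [Ioc_mem_nhdsGT_of_mem (⟨le_refl (0:ℝ), one_pos⟩ : (0:ℝ) ∈ Ico (0:ℝ) 1)]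
    with ε hε
  exact (hFpos ε hε).le

noncomputable def qsig (k : ℤ) (c : ℝ) : ℝ := if Even k then c else 1

lemma qsig_pos (k : ℤ) {c : ℝ} (hc : 0 < c) : 0 < qsig k c := by
  unfold qsig; split_ifs; exacts [hc, one_pos]

lemma neg_one_zpow_half (k : ℤ) (c : ℝ) :
    (c + 1) / 2 + (-1:ℝ) ^ k * ((c - 1) / 2) = qsig k c := by
  unfold qsig
  by_cases hk : Even k
  · rw [hk.neg_one_zpow, if_pos hk]; ring
  · rw [(Int.not_even_iff_odd.1 hk).neg_one_zpow, if_neg hk]; ring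

lemma dq_left (k : ℤ) (c x : ℝ) :
    dq ((k:ℝ) * π / 2) x c = qsig k c * Real.sin (x - (k:ℝ) * π / 2) := by
  unfold dq
  have h1 : x + (k:ℝ) * π / 2 = (x - (k:ℝ) * π / 2) + (k:ℤ) * π := by push_cast; ring
  rw [h1, Real.sin_add_int_mul_pi, ← neg_one_zpow_half k c]
  ring

lemma dq_right (k : ℤ) (c x : ℝ) :
    dq x (((k:ℝ) + 1) * π / 2) c = qsig k c * Real.cos (x - (k:ℝ) * π / 2) := by
  unfold dq
  have h1 : ((k:ℝ) + 1) * π / 2 - x = π / 2 - (x - (k:ℝ) * π / 2) := by ring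
  have h2 : ((k:ℝ) + 1) * π / 2 + x = ((x - (k:ℝ) * π / 2) + π / 2) + (k:ℤ) * π := by
    push_cast; ring
  rw [h1, h2, Real.sin_add_int_mul_pi, Real.sin_pi_div_two_sub, Real.sin_add_pi_div_two,
    ← neg_one_zpow_half k c]
  ring

lemma qInt_pos {q : ℝ} (hq : 0 < q) (m : ℕ) : 0 < qInt q (m + 1) := by
  unfold qInt
  exact Finset.sum_pos (fun i _ => pow_pos hq i) (Finset.nonempty_range_iff.2 (Nat.succ_ne_zero m))

lemma qFact_pos {q : ℝ} (hq : 0 < q) : ∀ m, 0 < qFact q m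
  | 0 => one_pos
  | m + 1 => mul_pos (qInt_pos hq m) (qFact_pos hq m)

lemma qBinom_pos {q : ℝ} (hq : 0 < q) (n m : ℕ) : 0 < qBinom q n m :=
  div_pos (qFact_pos hq n) (mul_pos (qFact_pos hq m) (qFact_pos hq (n - m)))

/-- The coefficient in the trigonometric factorization of `qBern`. -/
noncomputable def qBC (q : ℝ) (k : ℤ) (n i : ℕ) : ℝ :=
  qBinom q n i * ((∏ r ∈ Finset.range i, qsig k (q ^ r)) *
    ∏ r ∈ Finset.range (n - i), qsig k (q ^ r)) / ∏ r ∈ Finset.range n, qsig k (q ^ r)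

lemma qBC_pos {q : ℝ} (hq : 0 < q) (k : ℤ) (n i : ℕ) : 0 < qBC q k n i := by
  unfold qBC
  have h : ∀ m : ℕ, 0 < ∏ r ∈ Finset.range m, qsig k (q ^ r) :=
    fun m => Finset.prod_pos fun r _ => qsig_pos k (pow_pos hq r)
  exact div_pos (mul_pos (qBinom_pos hq n i) (mul_pos (h i) (h (n - i)))) (h n)

/-- Factorization of the quantum trigonometric Bernstein functions on a quadrant. -/
lemma qBern_eq (q : ℝ) (k : ℤ) (n i : ℕ) (x : ℝ) :
    qBern q ((k:ℝ) * π / 2) (((k:ℝ) + 1) * π / 2) n i x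
      = qBC q k n i * (Real.sin (x - (k:ℝ) * π / 2) ^ i
          * Real.cos (x - (k:ℝ) * π / 2) ^ (n - i)) := by
  unfold qBern qBC
  have key : ∀ (m : ℕ) (f : ℕ → ℝ) (y : ℝ), (∀ r, f r = qsig k (q ^ r) * y) →
      ∏ r ∈ Finset.range m, f r = (∏ r ∈ Finset.range m, qsig k (q ^ r)) * y ^ m := by
    intro m f y hf
    calc ∏ r ∈ Finset.range m, f r = ∏ r ∈ Finset.range m, qsig k (q ^ r) * y :=
          Finset.prod_congr rfl fun r _ => hf r
      _ = (∏ r ∈ Finset.range m, qsig k (q ^ r)) * y ^ m := by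
          rw [Finset.prod_mul_distrib, Finset.prod_const, Finset.card_range]
  have hL := key i _ _ (fun r => dq_left k (q ^ r) x)
  have hR := key (n - i) _ _ (fun r => dq_right k (q ^ r) x)
  have hD := key n _ _ (fun r => dq_left k (q ^ r) (((k:ℝ) + 1) * π / 2))
  have hs1 : Real.sin (((k:ℝ) + 1) * π / 2 - (k:ℝ) * π / 2) = 1 := by
    rw [show ((k:ℝ) + 1) * π / 2 - (k:ℝ) * π / 2 = π / 2 by ring, Real.sin_pi_div_two]
  rw [hL, hR, hD, hs1, one_pow]
  ring

/-- Theorem (total positivity): for `q > 0` and `k ∈ ℤ`, the quantum trigonometric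
Bernstein basis of degree `n` is totally positive on `[kπ/2, (k+1)π/2]`. -/
theorem qBern_totallyPositive (n : ℕ) (q : ℝ) (hq : 0 < q) (k : ℤ) :
    IsTotallyPositiveSystem
      (Set.Icc ((k : ℝ) * Real.pi / 2) (((k : ℝ) + 1) * Real.pi / 2))
      (fun i : Fin (n + 1) => fun x =>
        qBern q ((k : ℝ) * Real.pi / 2) (((k : ℝ) + 1) * Real.pi / 2) n i x) := by
  intro m x hx hxI κ f g hf hg
  have hsub : ((Matrix.of fun (i : Fin (n+1)) (j : Fin (m+1)) =>
        qBern q ((k:ℝ) * π / 2) (((k:ℝ) + 1) * π / 2) n i (x j)).submatrix f g)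
      = Matrix.of fun i j : Fin κ => qBC q k n (f i) *
          (Real.sin (x (g j) - (k:ℝ) * π / 2) ^ ((f i : ℕ))
            * Real.cos (x (g j) - (k:ℝ) * π / 2) ^ (n - (f i : ℕ))) := by
    ext i j
    simp only [Matrix.submatrix_apply, Matrix.of_apply]
    exact qBern_eq q k n (f i) (x (g j))
  rw [show ((Matrix.of fun i j => (fun i : Fin (n + 1) => fun x =>
      qBern q ((k:ℝ) * π / 2) (((k:ℝ) + 1) * π / 2) n i x) i (x j)).submatrix f g)
    = ((Matrix.of fun (i : Fin (n+1)) (j : Fin (m+1)) =>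
      qBern q ((k:ℝ) * π / 2) (((k:ℝ) + 1) * π / 2) n i (x j)).submatrix f g) from rfl, hsub,
    show (Matrix.of fun i j : Fin κ => qBC q k n (f i) *
            (Real.sin (x (g j) - (k:ℝ) * π / 2) ^ ((f i : ℕ))
              * Real.cos (x (g j) - (k:ℝ) * π / 2) ^ (n - (f i : ℕ)))).det = _ from
      Matrix.det_mul_column (fun i => qBC q k n (f i)) (Matrix.of fun i j : Fin κ =>
            (Real.sin (x (g j) - (k:ℝ) * π / 2) ^ ((f i : ℕ))
              * Real.cos (x (g j) - (k:ℝ) * π / 2) ^ (n - (f i : ℕ))))]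
  refine mul_nonneg (Finset.prod_nonneg fun i _ => (qBC_pos hq k n _).le) ?_
  refine trig_det_nonneg n κ (fun i => ((f i : ℕ))) (fun i l hil => hf hil)
    (fun i => Fin.is_le _) (fun j => x (g j) - (k:ℝ) * π / 2)
    (fun i l hil => by dsimp only; exact sub_lt_sub_right (hx (hg hil)) _) ?_
  intro j
  have h := hxI (g j)
  have hsplit : ((k:ℝ) + 1) * π / 2 = (k:ℝ) * π / 2 + π / 2 := by ring
  exact ⟨by linarith [h.1], by rw [hsplit] at h; linarith [h.2]⟩
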